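/- (Antisymmetry of the elliptic R-matrix at u = -ℏ.) For Belavin's R-matrix with Ř(u) := P·R(u), the specialized matrix Ř(-ℏ) satisfies Ř(-ℏ)^{ij}_{i'j'} = -Ř(-ℏ)^{ij}_{j'i'} for all indices, so that the image of Ř(-ℏ) is contained in the antisymmetric subspace Λ²(ℂ^n) ⊂ ℂ^n ⊗ ℂ^n. -/

import Mathlib

/-- `θ^{(j)}(u) := θ_{1/2 - j/n, 1}(u + 1/2, nτ)` for `j : ZMod n`. -/
noncomputable def thetaB (n : ℕ) (τ : ℂ) (j : ZMod n) (u : ℂ) : ℂ :=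
  ∑' μ : ℤ, Complex.exp ((2 * ↑Real.pi * Complex.I) *
    (((μ : ℂ) + 1/2 - (j.val : ℂ)/(n : ℂ)) * (u + 1/2) +
      ((μ : ℂ) + 1/2 - (j.val : ℂ)/(n : ℂ))^2 * ((n : ℂ) * τ) / 2))

/-- Matrix elements of Belavin's R-matrix. -/
noncomputable def belavinR (n : ℕ) (τ hb u : ℂ) (i j i' j' : ZMod n) : ℂ :=
  if i + j = i' + j' then
    thetaB n τ (i' - j') (u + hb) / (thetaB n τ (i' - i) hb * thetaB n τ (i - j') u) *
      (∏ k ∈ Finset.range n, thetaB n τ (k : ZMod n) u) /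
      (∏ k ∈ Finset.range (n - 1), thetaB n τ ((k : ZMod n) + 1) 0)
  else 0

/-- `Ř(u)^{ij}_{i'j'} := R(u)^{ij}_{j'i'}`. -/
noncomputable def belavinRcheck (n : ℕ) (τ hb u : ℂ) (i j i' j' : ZMod n) : ℂ :=
  belavinR n τ hb u i j j' i'

/-
`θ^{(j)}` is a theta series with characteristic `1/2 - j/n` evaluated at `u + 1/2`; reindexing
the series by `μ ↦ -μ` and shifting the characteristic by an integer gives the reflection
`θ^{(j)}(-u) = -e^{-2πij/n} θ^{(-j)}(u)`. At `u = -ℏ` the numerator of `R` is `θ^{(i'-j')}(0)`,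
so `R(-ℏ)` is `r(i'-i, i-j')` times a factor independent of `i'` and `j'`, where
`r(a, b) = θ^{(a+b)}(0) / (θ^{(a)}(ℏ) θ^{(b)}(-ℏ))`, and swapping `i'` and `j'` replaces
`r(a, b)` by `r(-b, -a)`. Reflecting the theta values at `0` and `-ℏ` shows
`r(-b, -a) = -r(a, b)`: the roots of unity cancel and only the sign survives.
-/

open Complex
open scoped Real

/-- `θ_{a,0}(z, T)`, the theta function with characteristic `(a, 0)`. -/
noncomputable def thetaChar (a z T : ℂ) : ℂ :=
  ∑' μ : ℤ, exp (2 * π * I * ((μ + a) * z + (μ + a) ^ 2 * T / 2))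

lemma thetaChar_add_intCast (a z T : ℂ) (m : ℤ) : thetaChar (a + m) z T = thetaChar a z T := by
  refine .trans ?_ ((Equiv.addRight m).tsum_eq _)
  refine tsum_congr fun μ => ?_
  push_cast [Equiv.coe_addRight]
  ring_nf

lemma thetaChar_neg_left (a z T : ℂ) : thetaChar a (-z) T = thetaChar (-a) z T := by
  refine .trans ?_ ((Equiv.neg ℤ).tsum_eq _)
  refine tsum_congr fun μ => ?_
  push_cast [Equiv.neg_apply]
  ring_nf

lemma thetaChar_add_one (a z T : ℂ) :
    thetaChar a (z + 1) T = exp (2 * π * I * a) * thetaChar a z T := by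
  unfold thetaChar
  rw [← tsum_mul_left]
  refine tsum_congr fun μ => ?_
  rw [← exp_add, show 2 * π * I * ((μ + a) * (z + 1) + (μ + a) ^ 2 * T / 2) =
    2 * π * I * a + 2 * π * I * ((μ + a) * z + (μ + a) ^ 2 * T / 2) + μ * (2 * π * I) by ring,
    exp_add _ (μ * _), exp_int_mul_two_pi_mul_I, mul_one]

lemma thetaB_eq_thetaChar (n : ℕ) (τ : ℂ) (j : ZMod n) (u : ℂ) :
    thetaB n τ j u = thetaChar (1 / 2 - j.val / n) (u + 1 / 2) (n * τ) := by
  unfold thetaB thetaChar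
  simp only [add_sub_assoc]

lemma dvd_val_neg_add_val (n : ℕ) [NeZero n] (j : ZMod n) : n ∣ (-j).val + j.val :=
  (ZMod.natCast_eq_zero_iff _ _).1 (by simp)

lemma thetaB_neg (n : ℕ) [NeZero n] (τ : ℂ) (j : ZMod n) (u : ℂ) :
    thetaB n τ j (-u) = -((ZMod.stdAddChar j)⁻¹ * thetaB n τ (-j) u) := by
  obtain ⟨k, hk⟩ := dvd_val_neg_add_val n j
  have hn : (n : ℂ) ≠ 0 := Nat.cast_ne_zero.2 (NeZero.ne n)
  have hchar : 1 / 2 - ((-j).val : ℂ) / n = -(1 / 2 - j.val / n) + ((1 - k : ℤ) : ℂ) := by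
    have : ((-j).val : ℂ) = n * k - j.val := by
      rw [eq_sub_iff_add_eq]; exact_mod_cast hk
    rw [this]; field_simp; push_cast; ring
  have hexp : exp (2 * π * I * (1 / 2 - j.val / n)) = -(ZMod.stdAddChar j)⁻¹ := by
    rw [ZMod.stdAddChar_apply, ZMod.toCircle_apply, ← exp_neg,
      show 2 * π * I * (1 / 2 - j.val / n) = -(2 * π * I * j.val / n) + π * I by ring,
      exp_add, exp_pi_mul_I, mul_neg_one]
  rw [thetaB_eq_thetaChar, thetaB_eq_thetaChar, hchar, thetaChar_add_intCast,
    show -u + 1 / 2 = -(u + 1 / 2) + 1 by ring, thetaChar_add_one, thetaChar_neg_left, hexp,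
    neg_mul]

noncomputable def thetaRatio (n : ℕ) (τ hb : ℂ) (a b : ZMod n) : ℂ :=
  thetaB n τ (a + b) 0 / (thetaB n τ a hb * thetaB n τ b (-hb))

lemma thetaRatio_neg_swap (n : ℕ) [NeZero n] (τ hb : ℂ) (a b : ZMod n) :
    thetaRatio n τ hb (-b) (-a) = -thetaRatio n τ hb a b := by
  have hχa : ZMod.stdAddChar a ≠ 0 := by simp [ZMod.stdAddChar_apply]
  have hχb : ZMod.stdAddChar b ≠ 0 := by simp [ZMod.stdAddChar_apply]
  have h0 := thetaB_neg n τ (-(a + b)) 0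
  rw [neg_zero, neg_neg] at h0
  rw [thetaRatio, thetaRatio, ← neg_add_rev, h0, thetaB_neg, thetaB_neg, neg_neg,
    AddChar.map_neg_eq_inv, AddChar.map_neg_eq_inv, inv_inv, inv_inv, AddChar.map_add_eq_mul]
  field_simp

lemma belavinR_neg_hb (n : ℕ) (τ hb : ℂ) {i j i' j' : ZMod n} (h : i + j = i' + j') :
    belavinR n τ hb (-hb) i j i' j' = thetaRatio n τ hb (i' - i) (i - j') *
      ((∏ k ∈ Finset.range n, thetaB n τ (k : ZMod n) (-hb)) /
      (∏ k ∈ Finset.range (n - 1), thetaB n τ ((k : ZMod n) + 1) 0)) := by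
  rw [belavinR, if_pos h, neg_add_cancel, thetaRatio, sub_add_sub_cancel, mul_div_assoc]

lemma Matrix.mulVec_swap_eq_neg {ι κ R : Type*} [Fintype κ] [Ring R] (M : Matrix (ι × ι) κ R)
    (hM : ∀ p q, M p.swap q = -M p q) (v : κ → R) (p : ι × ι) :
    M.mulVec v p.swap = -M.mulVec v p := by
  simp only [Matrix.mulVec, dotProduct, hM, neg_mul, Finset.sum_neg_distrib]

lemma belavinRcheck_neg_hb_swap (n : ℕ) [NeZero n] (τ hb : ℂ) (i j i' j' : ZMod n) :
    belavinRcheck n τ hb (-hb) i j i' j' = -belavinRcheck n τ hb (-hb) i j j' i' := by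
  by_cases h : i + j = i' + j'
  · have h' : i + j = j' + i' := h.trans (add_comm _ _)
    rw [belavinRcheck, belavinRcheck, belavinR_neg_hb n τ hb h, belavinR_neg_hb n τ hb h',
      ← neg_mul, ← thetaRatio_neg_swap, neg_sub, neg_sub]
  · have h' : ¬ i + j = j' + i' := by rwa [add_comm j']
    rw [belavinRcheck, belavinRcheck, belavinR, belavinR, if_neg h, if_neg h', neg_zero]

theorem belavinRcheck_antisymmetric_general (n : ℕ) [NeZero n] (τ : ℂ) (hb : ℂ) :
    (∀ i j i' j' : ZMod n,
      belavinRcheck n τ hb (-hb) i j i' j' = -belavinRcheck n τ hb (-hb) i j j' i') ∧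
    (∀ (v : ZMod n × ZMod n → ℂ) (i' j' : ZMod n),
      ((Matrix.of fun p q : ZMod n × ZMod n =>
          belavinRcheck n τ hb (-hb) q.1 q.2 p.1 p.2).mulVec v) (i', j') =
        -((Matrix.of fun p q : ZMod n × ZMod n =>
          belavinRcheck n τ hb (-hb) q.1 q.2 p.1 p.2).mulVec v) (j', i')) := by
  refine ⟨belavinRcheck_neg_hb_swap n τ hb, fun v i' j' => ?_⟩
  exact Matrix.mulVec_swap_eq_neg (Matrix.of _)
    (fun p q => belavinRcheck_neg_hb_swap n τ hb q.1 q.2 p.2 p.1) v (j', i')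

/-- Antisymmetry of the elliptic R-matrix at `u = -ℏ`:
`Ř(-ℏ)^{ij}_{i'j'} = -Ř(-ℏ)^{ij}_{j'i'}`, so the image of `Ř(-ℏ)` lies in the
antisymmetric subspace `Λ²(ℂ^n) ⊂ ℂ^n ⊗ ℂ^n`. -/
theorem belavinRcheck_antisymmetric (n : ℕ) [NeZero n] (hn : 2 ≤ n) (τ : ℂ)
    (hτ : 0 < τ.im) (hb : ℂ)
    (hlat : ¬ ∃ m k : ℤ, hb = (m : ℂ) + (k : ℂ) * τ)
    (hden1 : ∀ k : ZMod n, thetaB n τ k hb ≠ 0)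
    (hden2 : ∀ k : ZMod n, thetaB n τ k (-hb) ≠ 0)
    (hden3 : (∏ k ∈ Finset.range (n - 1), thetaB n τ ((k : ZMod n) + 1) 0) ≠ 0) :
    (∀ i j i' j' : ZMod n,
      belavinRcheck n τ hb (-hb) i j i' j' = -belavinRcheck n τ hb (-hb) i j j' i') ∧
    (∀ (v : ZMod n × ZMod n → ℂ) (i' j' : ZMod n),
      ((Matrix.of fun p q : ZMod n × ZMod n =>
          belavinRcheck n τ hb (-hb) q.1 q.2 p.1 p.2).mulVec v) (i', j') =
        -((Matrix.of fun p q : ZMod n × ZMod n =>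
          belavinRcheck n τ hb (-hb) q.1 q.2 p.1 p.2).mulVec v) (j', i')) :=
  belavinRcheck_antisymmetric_general n τ hb
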